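/- arXiv:2307.03905 — 2 statements merged into one kernel-verified Lean document; each statement's English description precedes it below -/
import Mathlib

section
/- Let H be a real inner product space, L : H → H linear and self-adjoint. Let s ∈ ℕ, let a : Fin s → Fin s → ℝ, b : Fin s → ℝ, τ > 0, and let u⁰ ∈ H, (u̇ᵢ)ᵢ ∈ H. Define uᵢ = u⁰ + τ ∑ⱼ aᵢⱼ u̇ⱼ and u¹ = u⁰ + τ ∑ᵢ bᵢ u̇ᵢ. Then (1/2)⟨u¹, L u¹⟩ - (1/2)⟨u⁰, L u⁰⟩ = τ ∑ᵢ bᵢ ⟨u̇ᵢ, L uᵢ⟩ - (τ²/2) ∑ᵢ ∑ⱼ Mᵢⱼ ⟨u̇ᵢ, L u̇ⱼ⟩, where Mᵢⱼ = bᵢ aᵢⱼ + bⱼ aⱼᵢ - bᵢ bⱼ. -/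
open scoped RealInnerProductSpace

theorem stmt_1 {H : Type*} [NormedAddCommGroup H] [InnerProductSpace ℝ H]
    (L : H →ₗ[ℝ] H)
    (hLsa : ∀ x y : H, ⟪L x, y⟫ = ⟪x, L y⟫)
    (s : ℕ) (a : Fin s → Fin s → ℝ) (b : Fin s → ℝ) (τ : ℝ) (hτ : 0 < τ)
    (u0 : H) (du : Fin s → H)
    (u : Fin s → H) (hu : ∀ i, u i = u0 + τ • ∑ j, a i j • du j)
    (u1 : H) (hu1 : u1 = u0 + τ • ∑ i, b i • du i) :
    (1/2) * ⟪u1, L u1⟫ - (1/2) * ⟪u0, L u0⟫ =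
      τ * ∑ i, b i * ⟪du i, L (u i)⟫ -
      (τ^2/2) * ∑ i, ∑ j, (b i * a i j + b j * a j i - b i * b j) * ⟪du i, L (du j)⟫ := by
  have key : ∀ x y : H, ⟪x, L y⟫ = ⟪y, L x⟫ := fun x y => by
    rw [← hLsa, real_inner_comm]
  set B : H := ∑ i, b i • du i with hB
  have hBB : ⟪B, L B⟫ = ∑ i, ∑ j, (b i * b j) * ⟪du i, L (du j)⟫ := by
    rw [hB, sum_inner]
    refine Finset.sum_congr rfl fun i _ => ?_
    rw [real_inner_smul_left, map_sum, inner_sum, Finset.mul_sum]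
    refine Finset.sum_congr rfl fun j _ => ?_
    rw [map_smul, real_inner_smul_right]
    ring
  have h1 : ⟪u1, L u1⟫ = ⟪u0, L u0⟫ + 2*τ*⟪B, L u0⟫ + τ^2 * ⟪B, L B⟫ := by
    rw [hu1]
    simp only [map_add, map_smul, inner_add_left, inner_add_right,
      real_inner_smul_left, real_inner_smul_right]
    rw [key u0 B]
    ring
  have h2 : ∑ i, b i * ⟪du i, L (u i)⟫ =
      ⟪B, L u0⟫ + τ * ∑ i, ∑ j, (b i * a i j) * ⟪du i, L (du j)⟫ := by
    rw [hB, sum_inner, Finset.mul_sum, ← Finset.sum_add_distrib]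
    refine Finset.sum_congr rfl fun i _ => ?_
    rw [hu i]
    simp only [map_add, map_smul, map_sum, inner_add_right, inner_sum,
      real_inner_smul_left, real_inner_smul_right]
    rw [mul_add]
    congr 1
    simp only [Finset.mul_sum]
    exact Finset.sum_congr rfl fun j _ => by ring
  have hswap : ∑ i, ∑ j, (b j * a j i) * ⟪du i, L (du j)⟫ =
      ∑ i, ∑ j, (b i * a i j) * ⟪du i, L (du j)⟫ := by
    rw [Finset.sum_comm]
    exact Finset.sum_congr rfl fun i _ => Finset.sum_congr rfl fun j _ => by
      rw [key (du j) (du i)]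
  have h3 : ∑ i, ∑ j, (b i * a i j + b j * a j i - b i * b j) * ⟪du i, L (du j)⟫ =
      2 * (∑ i, ∑ j, (b i * a i j) * ⟪du i, L (du j)⟫) - ⟪B, L B⟫ := by
    have expand : ∑ i, ∑ j, (b i * a i j + b j * a j i - b i * b j) * ⟪du i, L (du j)⟫ =
        (∑ i, ∑ j, (b i * a i j) * ⟪du i, L (du j)⟫)
        + (∑ i, ∑ j, (b j * a j i) * ⟪du i, L (du j)⟫)
        - (∑ i, ∑ j, (b i * b j) * ⟪du i, L (du j)⟫) := by
      simp only [add_mul, sub_mul, Finset.sum_add_distrib, Finset.sum_sub_distrib]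
    rw [expand, hswap, hBB]
    ring
  rw [h1, h2, h3]
  ring
end

section
/- Let s ∈ ℕ, a : Fin s → Fin s → ℝ, b : Fin s → ℝ with bᵢ ≥ 0, and M with Mᵢⱼ = bᵢ aᵢⱼ + bⱼ aⱼᵢ - bᵢ bⱼ positive semidefinite. Let τ > 0, q⁰ ∈ ℝ, q̇ᵢ ∈ ℝ, qᵢ = q⁰ + τ ∑ⱼ aᵢⱼ q̇ⱼ, q¹ = q⁰ + τ ∑ᵢ bᵢ q̇ᵢ. Then (q¹)² - (q⁰)² ≤ 2τ ∑ᵢ bᵢ qᵢ q̇ᵢ. -/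
theorem stmt_3 (s : ℕ) (a : Fin s → Fin s → ℝ) (b : Fin s → ℝ)
    (hb : ∀ i, 0 ≤ b i)
    (hM : ∀ x : Fin s → ℝ,
      0 ≤ ∑ i, ∑ j, (b i * a i j + b j * a j i - b i * b j) * x i * x j)
    (τ : ℝ) (hτ : 0 < τ)
    (q0 : ℝ) (dq : Fin s → ℝ)
    (q : Fin s → ℝ) (hq : ∀ i, q i = q0 + τ * ∑ j, a i j * dq j)
    (q1 : ℝ) (hq1 : q1 = q0 + τ * ∑ i, b i * dq i) :
    q1^2 - q0^2 ≤ 2 * τ * ∑ i, b i * q i * dq i := by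
  have key := hM dq
  set S := ∑ i, b i * dq i with hS
  set A := ∑ i, ∑ j, b i * a i j * dq i * dq j with hA
  have hswap : ∑ i, ∑ j, (b j * a j i) * dq i * dq j = A := by
    rw [Finset.sum_comm]
    simp only [hA]
    apply Finset.sum_congr rfl; intro i _
    apply Finset.sum_congr rfl; intro j _
    ring
  have hSq : S ^ 2 = ∑ i, ∑ j, (b i * b j) * dq i * dq j := by
    rw [hS, sq, Finset.sum_mul_sum]
    apply Finset.sum_congr rfl; intro i _
    apply Finset.sum_congr rfl; intro j _
    ring
  have hkey2 : 0 ≤ 2 * A - S ^ 2 := by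
    have heq : ∑ i, ∑ j, (b i * a i j + b j * a j i - b i * b j) * dq i * dq j
        = A + (∑ i, ∑ j, (b j * a j i) * dq i * dq j) - S ^ 2 := by
      rw [hSq, hA]
      simp only [add_mul, sub_mul, Finset.sum_add_distrib, Finset.sum_sub_distrib]
    rw [heq, hswap] at key; linarith
  have hrhs : ∑ i, b i * q i * dq i = q0 * S + τ * A := by
    rw [hS, hA, Finset.mul_sum, Finset.mul_sum, ← Finset.sum_add_distrib]
    apply Finset.sum_congr rfl; intro i _
    have h2 : τ * ∑ j, b i * a i j * dq i * dq j
        = b i * (τ * ∑ j, a i j * dq j) * dq i := by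
      simp only [Finset.mul_sum, Finset.sum_mul]
      exact Finset.sum_congr rfl fun j _ => by ring
    rw [hq i, h2]; ring
  rw [hq1, hrhs]
  nlinarith [sq_nonneg τ, mul_pos hτ hτ]
end
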